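/- Let λ ∈ [0,1), α > 0, and let (X_t) be the stationary ARMAX(λ) process with Fréchet(α) marginals, X_t = max{λX_{t-1}, (1-λ^α)^{1/α} Z_t} with i.i.d. Fréchet(α) innovations Z_t. Then for every κ > 0 and sequence a_n with n·P(X_0 > a_n) → κ, we have P(max_{t=1..n} X_t ≤ a_n) → exp(-κ(1-λ^α)) as n → ∞; i.e., the extremal index of (X_t) equals 1 - λ^α. -/

import Mathlib

/-!
For `x ≥ 0` the recursion `X_t = max (λ X_{t-1}) (c Z_t)` unrolls: `X_1, …, X_n ≤ x` holds exactly
when `λ X_0 ≤ x` and `c Z_1, …, c Z_n ≤ x`. By independence the innovation event has probability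
`exp (-n (1 - λ^α) x^{-α})`, and discarding the condition on `X_0` changes the probability by at
most `P(X_0 > x)`, which vanishes along `a_n`. Since `P(X_0 > x) = 1 - exp (-x^{-α})`, the
hypothesis `n P(X_0 > a_n) → κ` amounts to `n a_n^{-α} → κ`.
-/

open MeasureTheory ProbabilityTheory Real Filter Topology

section Recursion

variable {β : Type*} [LinearOrder β] {f : β → β} {X W : ℤ → β} {x : β} {n : ℤ}

theorem forall_le_iff_of_eq_max (hf : Monotone f) (hfx : f x ≤ x) (hn : 1 ≤ n)
    (hrec : ∀ t ∈ Finset.Icc 1 n, X t = max (f (X (t - 1))) (W t)) :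
    (∀ t ∈ Finset.Icc 1 n, X t ≤ x) ↔ f (X 0) ≤ x ∧ ∀ t ∈ Finset.Icc 1 n, W t ≤ x := by
  constructor
  · intro h
    have h1 : (1 : ℤ) ∈ Finset.Icc 1 n := Finset.mem_Icc.2 ⟨le_rfl, hn⟩
    have hX1 := h 1 h1
    rw [hrec 1 h1, max_le_iff] at hX1
    exact ⟨hX1.1, fun t ht => (max_le_iff.1 (hrec t ht ▸ h t ht)).2⟩
  · rintro ⟨h0, hW⟩ t ht
    induction t, (Finset.mem_Icc.1 ht).1 using Int.leInduction with
    | base => exact hrec 1 ht ▸ max_le h0 (hW 1 ht)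
    | succ t h1t ih =>
      have hprev : X t ≤ x := ih (Finset.mem_Icc.2 ⟨h1t, by grind⟩)
      rw [hrec (t + 1) ht, add_sub_cancel_right]
      exact max_le ((hf hprev).trans hfx) (hW _ ht)

end Recursion

section Sandwich

variable {Ω β : Type*} [MeasurableSpace Ω] [LinearOrder β] {μ : Measure Ω} {f : β → β}
  {X W : ℤ → Ω → β} {x : β} {n : ℤ}

theorem measure_forall_le_eq_of_ae_eq_max (hf : Monotone f) (hfx : f x ≤ x) (hn : 1 ≤ n)
    (hrec : ∀ᵐ ω ∂μ, ∀ t, X t ω = max (f (X (t - 1) ω)) (W t ω)) :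
    μ {ω | ∀ t ∈ Finset.Icc 1 n, X t ω ≤ x}
      = μ ({ω | f (X 0 ω) ≤ x} ∩ {ω | ∀ t ∈ Finset.Icc 1 n, W t ω ≤ x}) :=
  measure_congr <| eventuallyEq_set.2 <| hrec.mono fun _ hω =>
    forall_le_iff_of_eq_max hf hfx hn fun t _ => hω t

theorem toReal_measure_forall_le_mem_Icc_of_ae_eq_max [IsFiniteMeasure μ] (hf : Monotone f)
    (hfx : f x ≤ x) (hn : 1 ≤ n)
    (hrec : ∀ᵐ ω ∂μ, ∀ t, X t ω = max (f (X (t - 1) ω)) (W t ω)) :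
    (μ {ω | ∀ t ∈ Finset.Icc 1 n, X t ω ≤ x}).toReal ∈
      Set.Icc ((μ {ω | ∀ t ∈ Finset.Icc 1 n, W t ω ≤ x}).toReal - (μ {ω | x < X 0 ω}).toReal)
        (μ {ω | ∀ t ∈ Finset.Icc 1 n, W t ω ≤ x}).toReal := by
  set C := {ω | ∀ t ∈ Finset.Icc 1 n, W t ω ≤ x}
  set A := {ω | f (X 0 ω) ≤ x}
  have hE := measure_forall_le_eq_of_ae_eq_max hf hfx hn hrec
  have hdiff : C \ A ⊆ {ω | x < X 0 ω} := fun ω hω =>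
    lt_of_not_ge fun h => hω.2 ((hf h).trans hfx)
  have hlower : μ C ≤ μ {ω | ∀ t ∈ Finset.Icc 1 n, X t ω ≤ x} + μ {ω | x < X 0 ω} :=
    calc μ C ≤ μ (C ∩ A) + μ (C \ A) := measure_le_inter_add_sdiff μ C A
      _ ≤ μ (A ∩ C) + μ {ω | x < X 0 ω} := by
        rw [Set.inter_comm]
        exact add_le_add_right (measure_mono (μ := μ) hdiff) _
      _ = _ := by rw [hE]
  have hupper : μ {ω | ∀ t ∈ Finset.Icc 1 n, X t ω ≤ x} ≤ μ C :=
    hE ▸ measure_mono Set.inter_subset_right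
  constructor
  · have := ENNReal.toReal_mono (by finiteness) hlower
    rw [ENNReal.toReal_add (by finiteness) (by finiteness)] at this
    linarith
  · exact ENNReal.toReal_mono (by finiteness) hupper

end Sandwich

section Asymptotics

variable {p : ℕ → ℝ} {κ : ℝ}

theorem tendsto_zero_of_tendsto_natCast_mul (h : Tendsto (fun n : ℕ => n * p n) atTop (𝓝 κ)) :
    Tendsto p atTop (𝓝 0) := by
  refine (h.div_atTop tendsto_natCast_atTop_atTop).congr' ?_
  filter_upwards [eventually_ne_atTop 0] with n hn
  exact mul_div_cancel_left₀ _ (Nat.cast_ne_zero.2 hn)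

theorem tendsto_natCast_mul_neg_log_one_sub (h : Tendsto (fun n : ℕ => n * p n) atTop (𝓝 κ)) :
    Tendsto (fun n : ℕ => n * -log (1 - p n)) atTop (𝓝 κ) := by
  have hp := tendsto_zero_of_tendsto_natCast_mul h
  have hupper : Tendsto (fun n : ℕ => n * p n / (1 - p n)) atTop (𝓝 κ) := by
    have := h.div (tendsto_const_nhds.sub hp) (by norm_num : (1 : ℝ) - 0 ≠ 0)
    rwa [sub_zero, div_one] at this
  refine tendsto_of_tendsto_of_tendsto_of_le_of_le' h hupper ?_ ?_ <;>
    filter_upwards [hp.eventually (gt_mem_nhds one_pos)] with n hn <;>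
    have hq : 0 < 1 - p n := sub_pos.2 hn
  · have := log_le_sub_one_of_pos hq
    exact mul_le_mul_of_nonneg_left (by linarith) n.cast_nonneg
  · have hlog : -log (1 - p n) ≤ p n / (1 - p n) := by
      have := one_sub_inv_le_log_of_pos hq
      rw [show 1 - (1 - p n)⁻¹ = -(p n / (1 - p n)) by field_simp; ring] at this
      linarith
    rw [mul_div_assoc]
    exact mul_le_mul_of_nonneg_left hlog n.cast_nonneg

end Asymptotics

section Frechet

variable {Ω : Type*} [MeasurableSpace Ω] {μ : Measure Ω} {α : ℝ}

def HasFrechetCDF (μ : Measure Ω) (α : ℝ) (X : Ω → ℝ) : Prop :=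
  ∀ x : ℝ, 0 < x → μ {ω | X ω ≤ x} = ENNReal.ofReal (exp (-x ^ (-α)))

theorem measure_le_zero_of_frechet (hα : 0 < α) {X : Ω → ℝ} (hX : HasFrechetCDF μ α X) :
    μ {ω | X ω ≤ 0} = 0 := by
  have hlim : Tendsto (fun x : ℝ => ENNReal.ofReal (exp (-x ^ (-α)))) (𝓝[>] 0) (𝓝 0) := by
    simpa using ENNReal.tendsto_ofReal <| tendsto_exp_atBot.comp <|
      tendsto_neg_atTop_atBot.comp (tendsto_rpow_neg_nhdsGT_zero (neg_neg_of_pos hα))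
  refine le_antisymm (ge_of_tendsto hlim ?_) zero_le
  filter_upwards [self_mem_nhdsWithin] with x (hx : 0 < x)
  exact hX x hx ▸ measure_mono fun ω (hω : X ω ≤ 0) => hω.trans hx.le

theorem measure_forall_mul_le_of_iIndepFun {ι : Type*} {Z : ι → Ω → ℝ} (hind : iIndepFun Z μ)
    (hZ : ∀ i, HasFrechetCDF μ α (Z i))
    {c : ℝ} (hc : 0 < c) (s : Finset ι) {x : ℝ} (hx : 0 < x) :
    μ {ω | ∀ i ∈ s, c * Z i ω ≤ x} = ENNReal.ofReal (exp (-(s.card * x ^ (-α)) * c ^ α)) := by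
  have hset : {ω | ∀ i ∈ s, c * Z i ω ≤ x} = ⋂ i ∈ s, {ω | Z i ω ≤ x / c} := by
    ext ω; simp [le_div_iff₀' hc]
  have hscale : (x / c) ^ (-α) = x ^ (-α) * c ^ α := by
    rw [div_rpow hx.le hc.le, rpow_neg hc.le, div_inv_eq_mul]
  rw [hset, hind.meas_biInter (s := fun i => {ω | Z i ω ≤ x / c})
      fun i _ => MeasurableSpace.measurableSet_comap.2 ⟨_, measurableSet_Iic, rfl⟩,
    Finset.prod_congr rfl fun i _ => hZ i _ (div_pos hx hc), Finset.prod_const,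
    ← ENNReal.ofReal_pow (exp_nonneg _), ← exp_nat_mul, hscale]
  ring_nf

variable [IsProbabilityMeasure μ] {X : Ω → ℝ}

theorem measure_lt_of_nonpos_of_frechet (hα : 0 < α) (hXm : Measurable X)
    (hX : HasFrechetCDF μ α X)
    {x : ℝ} (hx : x ≤ 0) : μ {ω | x < X ω} = 1 := by
  have hpos : μ {ω | X ω ≤ 0}ᶜ = 1 := by
    rw [prob_compl_eq_one_sub (measurableSet_le hXm measurable_const),
      measure_le_zero_of_frechet hα hX, tsub_zero]
  refine le_antisymm prob_le_one (hpos ▸ measure_mono fun ω hω => ?_)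
  exact hx.trans_lt (not_le.1 hω)

theorem toReal_measure_lt_of_frechet (hXm : Measurable X)
    (hX : HasFrechetCDF μ α X)
    {x : ℝ} (hx : 0 < x) : (μ {ω | x < X ω}).toReal = 1 - exp (-x ^ (-α)) := by
  have hcompl : {ω | x < X ω} = {ω | X ω ≤ x}ᶜ := by ext; simp
  rw [hcompl, prob_compl_eq_one_sub (measurableSet_le hXm measurable_const), hX x hx,
    ← ENNReal.ofReal_one, ← ENNReal.ofReal_sub _ (exp_nonneg _), ENNReal.toReal_ofReal]
  exact sub_nonneg.2 (exp_le_one_iff.2 (neg_nonpos.2 (rpow_nonneg hx.le _)))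

theorem eventually_pos_of_tendsto_natCast_mul_measure_lt_of_frechet (hα : 0 < α)
    (hXm : Measurable X)
    (hX : HasFrechetCDF μ α X)
    {a : ℕ → ℝ} {κ : ℝ}
    (ha : Tendsto (fun n : ℕ => n * (μ {ω | a n < X ω}).toReal) atTop (𝓝 κ)) :
    ∀ᶠ n in atTop, 0 < a n := by
  filter_upwards [(tendsto_zero_of_tendsto_natCast_mul ha).eventually (gt_mem_nhds one_pos)]
    with n hn
  by_contra! h
  simp [measure_lt_of_nonpos_of_frechet hα hXm hX h] at hn

theorem tendsto_natCast_mul_rpow_neg_of_frechet (hα : 0 < α) (hXm : Measurable X)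
    (hX : HasFrechetCDF μ α X)
    {a : ℕ → ℝ} {κ : ℝ}
    (ha : Tendsto (fun n : ℕ => n * (μ {ω | a n < X ω}).toReal) atTop (𝓝 κ)) :
    Tendsto (fun n : ℕ => n * a n ^ (-α)) atTop (𝓝 κ) := by
  refine (tendsto_natCast_mul_neg_log_one_sub ha).congr' ?_
  filter_upwards [eventually_pos_of_tendsto_natCast_mul_measure_lt_of_frechet hα hXm hX ha]
    with n hn
  rw [toReal_measure_lt_of_frechet hXm hX hn, sub_sub_cancel, log_exp, neg_neg]

end Frechet

theorem armax_extremal_index_general {Ω : Type*} [MeasurableSpace Ω]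
    (μ : Measure Ω) [IsProbabilityMeasure μ] (lam α : ℝ)
    (hlam : 0 ≤ lam) (hlam1 : lam < 1) (hα : 0 < α)
    (Z : ℤ → Ω → ℝ)
    (hZindep : iIndepFun Z μ)
    (hZid : ∀ t : ℤ, ∀ x : ℝ, 0 < x →
      μ {ω | Z t ω ≤ x} = ENNReal.ofReal (Real.exp (-x ^ (-α))))
    (X : ℤ → Ω → ℝ) (hXm : ∀ t, Measurable (X t))
    (hXrec : ∀ t : ℤ, ∀ᵐ ω ∂μ,
      X t ω = max (lam * X (t - 1) ω) ((1 - lam ^ α) ^ (1 / α) * Z t ω))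
    (hXmarg : ∀ t : ℤ, ∀ x : ℝ, 0 < x →
      μ {ω | X t ω ≤ x} = ENNReal.ofReal (Real.exp (-x ^ (-α))))
    (κ : ℝ) (a : ℕ → ℝ)
    (ha : Tendsto (fun n : ℕ => (n : ℝ) * (μ {ω | a n < X 0 ω}).toReal)
      atTop (nhds κ)) :
    Tendsto (fun n : ℕ =>
        (μ {ω | ∀ t ∈ Finset.Icc (1 : ℤ) (n : ℤ), X t ω ≤ a n}).toReal)
      atTop (nhds (Real.exp (-κ * (1 - lam ^ α)))) := by
  have hlamα : 0 < 1 - lam ^ α := sub_pos.2 (rpow_lt_one hlam hlam1 hα)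
  set c := (1 - lam ^ α) ^ (1 / α) with hc_def
  have hc : 0 < c := rpow_pos_of_pos hlamα _
  have hcα : c ^ α = 1 - lam ^ α := by rw [hc_def, one_div, rpow_inv_rpow hlamα.le hα.ne']
  have hrec : ∀ᵐ ω ∂μ, ∀ t, X t ω = max (lam * X (t - 1) ω) (c * Z t ω) := ae_all_iff.2 hXrec
  have hapos :=
    eventually_pos_of_tendsto_natCast_mul_measure_lt_of_frechet hα (hXm 0) (hXmarg 0) ha
  set g : ℕ → ℝ := fun n => exp (-(n * a n ^ (-α)) * (1 - lam ^ α))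
  have hg : Tendsto g atTop (𝓝 (exp (-κ * (1 - lam ^ α)))) :=
    (continuous_exp.tendsto _).comp
      ((tendsto_natCast_mul_rpow_neg_of_frechet hα (hXm 0) (hXmarg 0) ha).neg.mul_const _)
  have hbounds : ∀ᶠ n : ℕ in atTop,
      (μ {ω | ∀ t ∈ Finset.Icc (1 : ℤ) (n : ℤ), X t ω ≤ a n}).toReal ∈
        Set.Icc (g n - (μ {ω | a n < X 0 ω}).toReal) (g n) := by
    filter_upwards [hapos, eventually_ge_atTop 1] with n hn hn1
    have hC : (μ {ω | ∀ t ∈ Finset.Icc (1 : ℤ) n, c * Z t ω ≤ a n}).toReal = g n := by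
      rw [measure_forall_mul_le_of_iIndepFun hZindep hZid hc _ hn, Int.card_Icc, hcα,
        ENNReal.toReal_ofReal (exp_nonneg _)]
      simp [g]
    exact hC ▸ toReal_measure_forall_le_mem_Icc_of_ae_eq_max (f := (lam * ·))
      (W := fun t ω => c * Z t ω) (monotone_mul_left_of_nonneg hlam)
      (mul_le_of_le_one_left hn.le hlam1.le) (by exact_mod_cast hn1) hrec
  exact tendsto_of_tendsto_of_tendsto_of_le_of_le'
    (by simpa using hg.sub (tendsto_zero_of_tendsto_natCast_mul ha)) hg
    (hbounds.mono fun _ h => h.1) (hbounds.mono fun _ h => h.2)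

/-- The extremal index of the stationary ARMAX(λ) process with Fréchet(α)
marginals equals `1 - λ^α`: whenever `n·P(X_0 > a_n) → κ`,
`P(max_{t=1..n} X_t ≤ a_n) → exp(-κ(1-λ^α))`. -/
theorem armax_extremal_index {Ω : Type*} [MeasurableSpace Ω]
    (μ : Measure Ω) [IsProbabilityMeasure μ] (lam α : ℝ)
    (hlam : 0 ≤ lam) (hlam1 : lam < 1) (hα : 0 < α)
    (Z : ℤ → Ω → ℝ) (hZm : ∀ t, Measurable (Z t))
    (hZindep : iIndepFun Z μ)
    (hZid : ∀ t : ℤ, ∀ x : ℝ, 0 < x →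
      μ {ω | Z t ω ≤ x} = ENNReal.ofReal (Real.exp (-x ^ (-α))))
    (X : ℤ → Ω → ℝ) (hXm : ∀ t, Measurable (X t))
    (hXrec : ∀ t : ℤ, ∀ᵐ ω ∂μ,
      X t ω = max (lam * X (t - 1) ω) ((1 - lam ^ α) ^ (1 / α) * Z t ω))
    (hXmarg : ∀ t : ℤ, ∀ x : ℝ, 0 < x →
      μ {ω | X t ω ≤ x} = ENNReal.ofReal (Real.exp (-x ^ (-α))))
    (κ : ℝ) (hκ : 0 < κ) (a : ℕ → ℝ)
    (ha : Tendsto (fun n : ℕ => (n : ℝ) * (μ {ω | a n < X 0 ω}).toReal)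
      atTop (nhds κ)) :
    Tendsto (fun n : ℕ =>
        (μ {ω | ∀ t ∈ Finset.Icc (1 : ℤ) (n : ℤ), X t ω ≤ a n}).toReal)
      atTop (nhds (Real.exp (-κ * (1 - lam ^ α)))) :=
  armax_extremal_index_general μ lam α hlam hlam1 hα Z hZindep hZid X hXm hXrec hXmarg κ a ha
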